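/- arXiv:2505.10467 — 2 statements merged into one kernel-verified Lean document; each statement's English description precedes it below -/
import Mathlib

section
/- The only possibly non-trivial (n,b,d)-thick Betti numbers of a finite simplicial complex X are those with (b = 0 and d ≥ n+1) or (b ≥ n+2 and d > b). That is, every interval [b,d) in the barcode of H^n(X^•;k) has either b = 0 and d ≥ n+1, or b ≥ n+2. -/
set_option linter.unusedSectionVars false
set_option linter.unusedVariables false

open Finset

/-- An abstract simplicial complex on the ambient vertex type `V`:
a finite collection of nonempty finite subsets of `V` closed under nonempty subsets. -/
structure AbsSC (V : Type) where
  faces : Finset (Finset V)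
  nonempty_of_mem : ∀ σ ∈ faces, σ.Nonempty
  down_closed : ∀ σ ∈ faces, ∀ τ, τ ⊆ σ → τ.Nonempty → τ ∈ faces

section Basic

variable {V : Type} [Fintype V] [LinearOrder V]

/-- The `h`-coskeleton of `X`: simplices contained in some simplex of dimension `≥ h`
(`dim τ = τ.card - 1`, so `dim τ ≥ h ↔ h + 1 ≤ τ.card`). -/
def coskeleton (X : AbsSC V) (h : ℕ) : AbsSC V where
  faces := X.faces.filter fun σ => ∃ τ ∈ X.faces, σ ⊆ τ ∧ h + 1 ≤ τ.card
  nonempty_of_mem σ hσ := X.nonempty_of_mem σ (mem_filter.1 hσ).1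
  down_closed σ hσ τ hτσ hne := by
    rw [mem_filter] at hσ ⊢
    obtain ⟨h1, τ', hτ', hsub, hcard⟩ := hσ
    exact ⟨X.down_closed σ h1 τ hτσ hne, τ', hτ', hτσ.trans hsub, hcard⟩

/-- The dimension of a finite simplicial complex. -/
def dimX (X : AbsSC V) : ℕ := X.faces.sup fun σ => σ.card - 1

lemma cosk_subset (X : AbsSC V) (h : ℕ) : (coskeleton X h).faces ⊆ X.faces :=
  filter_subset _ _

lemma cosk_le (X : AbsSC V) {h h' : ℕ} (hh : h ≤ h') :
    (coskeleton X h').faces ⊆ (coskeleton X h).faces := by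
  intro σ hσ
  simp only [coskeleton, mem_filter] at hσ ⊢
  obtain ⟨h1, τ, hτ, hsub, hc⟩ := hσ
  exact ⟨h1, τ, hτ, hsub, by omega⟩

/-- The set of `n`-dimensional simplices of `X`. -/
def simps (X : AbsSC V) (n : ℕ) : Finset (Finset V) :=
  X.faces.filter fun σ => σ.card = n + 1

/-- Evaluation of a simplicial `n`-cochain on a finite set (zero if it is not an `n`-simplex). -/
noncomputable def evalL (X : AbsSC V) (k : Type) [Field k] (n : ℕ) (τ : Finset V) :
    ({σ : Finset V // σ ∈ simps X n} → k) →ₗ[k] k :=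
  if h : τ ∈ simps X n then LinearMap.proj (⟨τ, h⟩ : {σ : Finset V // σ ∈ simps X n}) else 0

/-- The simplicial coboundary operator `δⁿ : Cⁿ(X;k) → Cⁿ⁺¹(X;k)`, with signs determined
by the position of the removed vertex in the increasing enumeration of the simplex. -/
noncomputable def delta (X : AbsSC V) (k : Type) [Field k] (n : ℕ) :
    ({σ : Finset V // σ ∈ simps X n} → k) →ₗ[k]
      ({σ : Finset V // σ ∈ simps X (n + 1)} → k) :=
  LinearMap.pi fun σ =>
    ∑ v ∈ (σ : Finset V),
      ((-1 : k) ^ ((σ : Finset V).sort (· ≤ ·)).idxOf v) • evalL X k n ((σ : Finset V).erase v)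

/-- `δ` landing in degree `n` (the zero map for `n = 0`). -/
noncomputable def deltaTo (X : AbsSC V) (k : Type) [Field k] :
    (n : ℕ) → ({σ : Finset V // σ ∈ simps X (n - 1)} → k) →ₗ[k]
      ({σ : Finset V // σ ∈ simps X n} → k)
  | 0 => 0
  | (m + 1) => delta X k m

/-- The `n`-th simplicial cohomology of `X` with coefficients in `k`. -/
noncomputable abbrev Hmod (X : AbsSC V) (k : Type) [Field k] (n : ℕ) :=
  ↥(LinearMap.ker (delta X k n)) ⧸
    ((LinearMap.range (deltaTo X k n)).comap (LinearMap.ker (delta X k n)).subtype)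

/-- The `n`-th Betti number of `X` with coefficients in `k`. -/
noncomputable def betti (X : AbsSC V) (k : Type) [Field k] (n : ℕ) : ℕ :=
  Module.finrank k (Hmod X k n)

lemma mem_simps_of_subcomplex {X X' : AbsSC V} (hs : X'.faces ⊆ X.faces) {n : ℕ}
    {σ : Finset V} (hσ : σ ∈ simps X' n) : σ ∈ simps X n := by
  simp only [simps, mem_filter] at hσ ⊢
  exact ⟨hs hσ.1, hσ.2⟩

/-- Restriction of cochains along the inclusion of a subcomplex. -/
noncomputable def resL (X X' : AbsSC V) (hs : X'.faces ⊆ X.faces) (k : Type) [Field k] (n : ℕ) :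
    ({σ : Finset V // σ ∈ simps X n} → k) →ₗ[k] ({σ : Finset V // σ ∈ simps X' n} → k) :=
  LinearMap.pi fun σ => LinearMap.proj (⟨σ.1, mem_simps_of_subcomplex hs σ.2⟩ :
    {σ : Finset V // σ ∈ simps X n})

lemma erase_mem_simps (X : AbsSC V) {n : ℕ} {σ : Finset V} (hσ : σ ∈ simps X (n + 1)) {v : V}
    (hv : v ∈ σ) : σ.erase v ∈ simps X n := by
  simp only [simps, mem_filter] at hσ ⊢
  have hc : (σ.erase v).card = n + 1 := by
    rw [Finset.card_erase_of_mem hv, hσ.2]; omega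
  exact ⟨X.down_closed σ hσ.1 _ (Finset.erase_subset _ _)
    (by rw [← Finset.card_pos, hc]; omega), hc⟩

lemma evalL_res (X X' : AbsSC V) (hs : X'.faces ⊆ X.faces) (k : Type) [Field k] (n : ℕ)
    {τ : Finset V} (hτ : τ ∈ simps X' n) (x : {σ : Finset V // σ ∈ simps X n} → k) :
    evalL X' k n τ (resL X X' hs k n x) = evalL X k n τ x := by
  have hτX : τ ∈ simps X n := mem_simps_of_subcomplex hs hτ
  rw [evalL, dif_pos hτ, evalL, dif_pos hτX]
  simp [resL]

lemma delta_res (X X' : AbsSC V) (hs : X'.faces ⊆ X.faces) (k : Type) [Field k] (n : ℕ) :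
    (delta X' k n) ∘ₗ resL X X' hs k n = (resL X X' hs k (n + 1)) ∘ₗ delta X k n := by
  have hres : ∀ (m : ℕ) (x : {σ : Finset V // σ ∈ simps X m} → k)
      (σ : {σ : Finset V // σ ∈ simps X' m}),
      resL X X' hs k m x σ = x ⟨σ.1, mem_simps_of_subcomplex hs σ.2⟩ := fun _ _ _ => rfl
  apply LinearMap.ext; intro x
  funext σ
  simp only [LinearMap.comp_apply]
  rw [hres]
  simp only [delta, LinearMap.pi_apply, LinearMap.sum_apply, LinearMap.smul_apply, smul_eq_mul]
  refine Finset.sum_congr rfl fun v hv => ?_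
  rw [evalL_res X X' hs k n (erase_mem_simps X' σ.2 hv)]

lemma deltaTo_res (X X' : AbsSC V) (hs : X'.faces ⊆ X.faces) (k : Type) [Field k] :
    ∀ n : ℕ, (deltaTo X' k n) ∘ₗ resL X X' hs k (n - 1) =
      (resL X X' hs k n) ∘ₗ deltaTo X k n
  | 0 => by
    apply LinearMap.ext; intro x
    simp [deltaTo]
  | (m + 1) => delta_res X X' hs k m

/-- The map on cohomology induced by the inclusion of a subcomplex. -/
noncomputable def Hmap (X X' : AbsSC V) (hs : X'.faces ⊆ X.faces) (k : Type) [Field k] (n : ℕ) :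
    Hmod X k n →ₗ[k] Hmod X' k n :=
  Submodule.mapQ _ _
    ((resL X X' hs k n).restrict (p := LinearMap.ker (delta X k n))
      (q := LinearMap.ker (delta X' k n))
      (fun x hx => by
        have hcomm := congrArg (fun g => g x) (delta_res X X' hs k n)
        simp only [LinearMap.comp_apply] at hcomm
        rw [LinearMap.mem_ker] at hx ⊢
        rw [hcomm, hx, map_zero]))
    (by
      intro x hx
      simp only [Submodule.mem_comap, LinearMap.mem_range, Submodule.coe_subtype] at hx ⊢
      obtain ⟨y, hy⟩ := hx
      refine ⟨resL X X' hs k (n - 1) y, ?_⟩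
      have hcomm := congrArg (fun g => g y) (deltaTo_res X X' hs k n)
      simp only [LinearMap.comp_apply] at hcomm
      rw [hcomm, hy]
      rfl)

end Basic

/-- A simplicial isomorphism between two finite simplicial complexes: a map on vertices,
simplicial in both directions, bijective on the vertex sets. -/
structure SCIso {V W : Type} [DecidableEq V] [DecidableEq W] (X : AbsSC V) (Y : AbsSC W) where
  toFun : V → W
  invFun : W → V
  map_faces : ∀ σ ∈ X.faces, σ.image toFun ∈ Y.faces
  inv_faces : ∀ τ ∈ Y.faces, τ.image invFun ∈ X.faces
  left_inv : ∀ v : V, ({v} : Finset V) ∈ X.faces → invFun (toFun v) = v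
  right_inv : ∀ w : W, ({w} : Finset W) ∈ Y.faces → toFun (invFun w) = w

section Pers

variable {V : Type} [Fintype V] [LinearOrder V]

/-- A persistence module over `k` indexed by `ℕ`. -/
structure PersMod (k : Type) [Field k] where
  M : ℕ → Type
  [acg : ∀ i, AddCommGroup (M i)]
  [mdl : ∀ i, Module k (M i)]
  map : ∀ i : ℕ, M i →ₗ[k] M (i + 1)

attribute [instance] PersMod.acg PersMod.mdl

/-- An isomorphism of persistence modules. -/
structure PersIso (k : Type) [Field k] (A B : PersMod k) where
  e : ∀ i, A.M i ≃ₗ[k] B.M i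
  comm : ∀ i x, e (i + 1) (A.map i x) = B.map i (e i x)

/-- The interval persistence module `k[b,d)`. -/
noncomputable def intervalMod (k : Type) [Field k] (b d : ℕ) : PersMod k where
  M i := {j : ℕ // j = i ∧ b ≤ j ∧ j < d} → k
  map i :=
    { toFun := fun x _ => if h : b ≤ i ∧ i < d then x ⟨i, rfl, h.1, h.2⟩ else 0
      map_add' := by intro a b'; funext j; by_cases h : b ≤ i ∧ i < d <;> simp [h]
      map_smul' := by intro c a; funext j; by_cases h : b ≤ i ∧ i < d <;> simp [h] }

/-- Finite direct sum of persistence modules. -/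
noncomputable def dirSum (k : Type) [Field k] {m : ℕ} (P : Fin m → PersMod k) : PersMod k where
  M i := ∀ j, (P j).M i
  map i := LinearMap.pi fun j => ((P j).map i).comp (LinearMap.proj j)

/-- The persistence module of the coskeletal cofiltration `X = X⁰ ⊇ X¹ ⊇ ⋯` in degree `n`. -/
noncomputable def coskPers (X : AbsSC V) (k : Type) [Field k] (n : ℕ) : PersMod k where
  M h := Hmod (coskeleton X h) k n
  map h := Hmap (coskeleton X h) (coskeleton X (h + 1)) (cosk_le X (by omega)) k n

end Pers

section Poset

variable {V : Type} [Fintype V] [LinearOrder V]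

/-- The `h`-face poset of `X` (as a finite set of simplices, ordered by `⊂`):
the simplices whose dimension lies in `hs`. -/
def hposet (X : AbsSC V) (hs : Finset ℕ) : Finset (Finset V) :=
  X.faces.filter fun σ => σ.card - 1 ∈ hs

/-- Strictly increasing chains of length `n+1` in a finite family of finite sets,
ordered by strict inclusion. -/
def PChain (P : Finset (Finset V)) (n : ℕ) : Type :=
  {f : Fin (n + 1) → Finset V // (∀ i, f i ∈ P) ∧ StrictMono f}

/-- The `i`-th face of a chain (deleting the `i`-th entry). -/
def chainFace {P : Finset (Finset V)} {n : ℕ} (g : PChain P (n + 1)) (i : Fin (n + 2)) :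
    PChain P n :=
  ⟨fun j => g.1 (i.succAbove j), fun j => g.2.1 _, g.2.2.comp (Fin.strictMono_succAbove i)⟩

/-- The coboundary of the cochain complex computing the cohomology of the constant
sheaf `k` over a finite poset of finite sets. -/
noncomputable def deltaP (P : Finset (Finset V)) (k : Type) [Field k] (n : ℕ) :
    (PChain P n → k) →ₗ[k] (PChain P (n + 1) → k) :=
  LinearMap.pi fun g =>
    ∑ i : Fin (n + 2), ((-1 : k) ^ (i : ℕ)) • LinearMap.proj (chainFace g i)

noncomputable def deltaPTo (P : Finset (Finset V)) (k : Type) [Field k] :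
    (n : ℕ) → (PChain P (n - 1) → k) →ₗ[k] (PChain P n → k)
  | 0 => 0
  | (m + 1) => deltaP P k m

/-- The `n`-th cohomology of (the constant sheaf `k` on) a finite poset of finite sets. -/
noncomputable abbrev PHmod (P : Finset (Finset V)) (k : Type) [Field k] (n : ℕ) :=
  ↥(LinearMap.ker (deltaP P k n)) ⧸
    ((LinearMap.range (deltaPTo P k n)).comap (LinearMap.ker (deltaP P k n)).subtype)

/-- Betti numbers of a finite poset of finite sets. -/
noncomputable def pbetti (P : Finset (Finset V)) (k : Type) [Field k] (n : ℕ) : ℕ :=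
  Module.finrank k (PHmod P k n)

/-- The barycentric subdivision of `X`: vertices are the simplices of `X` and faces are
the nonempty chains of simplices of `X` totally ordered by inclusion. -/
def bary (X : AbsSC V) : AbsSC (Finset V) where
  faces := X.faces.powerset.filter fun c => c.Nonempty ∧ ∀ σ ∈ c, ∀ τ ∈ c, σ ⊆ τ ∨ τ ⊆ σ
  nonempty_of_mem c hc := (mem_filter.1 hc).2.1
  down_closed c hc d hdc hdne := by
    rw [mem_filter, mem_powerset] at hc ⊢
    exact ⟨hdc.trans hc.1, hdne, fun σ hσ τ hτ => hc.2.2 σ (hdc hσ) τ (hdc hτ)⟩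

/-- The `hs`-barycentric subdivision `K(X)^hs`: chains all of whose members have
dimension in `hs`. -/
def baryH (X : AbsSC V) (hs : Finset ℕ) : AbsSC (Finset V) where
  faces := (bary X).faces.filter fun c => ∀ σ ∈ c, σ.card - 1 ∈ hs
  nonempty_of_mem c hc := (bary X).nonempty_of_mem c (mem_filter.1 hc).1
  down_closed c hc d hdc hdne := by
    rw [mem_filter] at hc ⊢
    exact ⟨(bary X).down_closed c hc.1 d hdc hdne, fun σ hσ => hc.2 σ (hdc hσ)⟩

end Poset


section AuxProof

variable {V : Type} [Fintype V] [LinearOrder V]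

/-- Extension by zero of cochains from a subcomplex. -/
noncomputable def extL (X X' : AbsSC V) (hs : X'.faces ⊆ X.faces) (k : Type) [Field k] (n : ℕ) :
    ({σ : Finset V // σ ∈ simps X' n} → k) →ₗ[k] ({σ : Finset V // σ ∈ simps X n} → k) :=
  LinearMap.pi fun σ => if h : σ.1 ∈ simps X' n then LinearMap.proj
    (⟨σ.1, h⟩ : {σ : Finset V // σ ∈ simps X' n}) else 0

lemma resL_inj (X X' : AbsSC V) (hs : X'.faces ⊆ X.faces) (k : Type) [Field k] (n : ℕ)
    (hc : ∀ σ : Finset V, σ ∈ simps X n → σ ∈ simps X' n) :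
    Function.Injective (resL X X' hs k n) := by
  intro a b hab
  funext σ
  exact congrFun hab ⟨σ.1, hc σ.1 σ.2⟩

lemma res_ext (X X' : AbsSC V) (hs : X'.faces ⊆ X.faces) (k : Type) [Field k] (n : ℕ)
    (y : {σ : Finset V // σ ∈ simps X' n} → k) :
    resL X X' hs k n (extL X X' hs k n y) = y := by
  funext σ
  show extL X X' hs k n y ⟨σ.1, mem_simps_of_subcomplex hs σ.2⟩ = y σ
  simp only [extL, LinearMap.pi_apply]
  rw [dif_pos σ.2]
  rfl

lemma evalL_ext (X X' : AbsSC V) (hs : X'.faces ⊆ X.faces) (k : Type) [Field k] (n : ℕ)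
    (τ : Finset V) (y : {σ : Finset V // σ ∈ simps X' n} → k) :
    evalL X k n τ (extL X X' hs k n y) = evalL X' k n τ y := by
  by_cases h' : τ ∈ simps X' n
  · have hX : τ ∈ simps X n := mem_simps_of_subcomplex hs h'
    rw [evalL, dif_pos hX, evalL, dif_pos h']
    show extL X X' hs k n y ⟨τ, hX⟩ = y ⟨τ, h'⟩
    simp only [extL, LinearMap.pi_apply]
    rw [dif_pos h']
    rfl
  · rw [evalL, evalL, dif_neg h']
    by_cases hX : τ ∈ simps X n
    · rw [dif_pos hX]
      show extL X X' hs k n y ⟨τ, hX⟩ = (0 : _ →ₗ[k] k) y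
      simp only [extL, LinearMap.pi_apply]
      rw [dif_neg h']
    · rw [dif_neg hX]
      rfl

lemma res_delta_ext (X X' : AbsSC V) (hs : X'.faces ⊆ X.faces) (k : Type) [Field k] (n : ℕ) :
    resL X X' hs k (n + 1) ∘ₗ (delta X k n ∘ₗ extL X X' hs k n) = delta X' k n := by
  apply LinearMap.ext; intro y
  funext σ
  show delta X k n (extL X X' hs k n y) ⟨σ.1, mem_simps_of_subcomplex hs σ.2⟩ = delta X' k n y σ
  simp only [delta, LinearMap.pi_apply, LinearMap.sum_apply, LinearMap.smul_apply, smul_eq_mul]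
  exact Finset.sum_congr rfl fun v hv => by rw [evalL_ext]

lemma res_deltaTo_ext (X X' : AbsSC V) (hs : X'.faces ⊆ X.faces) (k : Type) [Field k] :
    ∀ n : ℕ, resL X X' hs k n ∘ₗ (deltaTo X k n ∘ₗ extL X X' hs k (n - 1)) = deltaTo X' k n
  | 0 => by
    apply LinearMap.ext; intro y
    show resL X X' hs k 0 ((0 : _ →ₗ[k] _) (extL X X' hs k 0 y)) = (0 : _ →ₗ[k] _) y
    simp
  | (m + 1) => res_delta_ext X X' hs k m

lemma Hmap_surj (X X' : AbsSC V) (hs : X'.faces ⊆ X.faces) (k : Type) [Field k] (n : ℕ)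
    (hc : ∀ σ : Finset V, σ ∈ simps X (n + 1) → σ ∈ simps X' (n + 1)) :
    Function.Surjective (Hmap X X' hs k n) := by
  intro z
  obtain ⟨⟨y, hy⟩, rfl⟩ := Submodule.Quotient.mk_surjective _ z
  have hy' : delta X' k n y = 0 := hy
  have hker : delta X k n (extL X X' hs k n y) = 0 := by
    apply resL_inj X X' hs k (n + 1) hc
    rw [map_zero]
    have h1 := congrArg (fun g => g y) (res_delta_ext X X' hs k n)
    simp only [LinearMap.comp_apply] at h1
    rw [h1, hy']
  refine ⟨Submodule.Quotient.mk ⟨extL X X' hs k n y, hker⟩, ?_⟩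
  show Submodule.mapQ _ _ _ _ _ = _
  rw [Submodule.mapQ_apply]
  congr 1
  apply Subtype.ext
  exact res_ext X X' hs k n y

lemma Hmap_inj (X X' : AbsSC V) (hs : X'.faces ⊆ X.faces) (k : Type) [Field k] (n : ℕ)
    (hc : ∀ σ : Finset V, σ ∈ simps X n → σ ∈ simps X' n) :
    Function.Injective (Hmap X X' hs k n) := by
  refine (injective_iff_map_eq_zero _).mpr ?_
  intro a ha
  obtain ⟨⟨x, hx⟩, rfl⟩ := Submodule.Quotient.mk_surjective _ a
  rw [show Hmap X X' hs k n = Submodule.mapQ _ _ _ _ from rfl, Submodule.mapQ_apply,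
    Submodule.Quotient.mk_eq_zero] at ha
  rw [Submodule.Quotient.mk_eq_zero]
  simp only [Submodule.mem_comap, Submodule.coe_subtype, LinearMap.mem_range,
    LinearMap.restrict_coe_apply] at ha ⊢
  obtain ⟨w, hw⟩ := ha
  refine ⟨extL X X' hs k (n - 1) w, ?_⟩
  apply resL_inj X X' hs k n hc
  have h1 := congrArg (fun g => g w) (res_deltaTo_ext X X' hs k n)
  simp only [LinearMap.comp_apply] at h1
  rw [h1, hw]

lemma mem_simps_cosk (X : AbsSC V) {h m : ℕ} (hm : h ≤ m) {σ : Finset V}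
    (hσ : σ ∈ simps X m) : σ ∈ simps (coskeleton X h) m := by
  simp only [simps, coskeleton, mem_filter] at hσ ⊢
  exact ⟨⟨hσ.1, σ, hσ.1, Finset.Subset.refl σ, by omega⟩, hσ.2⟩

lemma coskPers_surj (X : AbsSC V) (k : Type) [Field k] (n h : ℕ) (hh : h ≤ n) :
    Function.Surjective ((coskPers X k n).map h) :=
  Hmap_surj _ _ _ k n fun σ hσ =>
    mem_simps_cosk X (by omega) (mem_simps_of_subcomplex (cosk_subset X h) hσ)

lemma coskPers_inj (X : AbsSC V) (k : Type) [Field k] (n h : ℕ) (hh : h + 1 ≤ n) :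
    Function.Injective ((coskPers X k n).map h) :=
  Hmap_inj _ _ _ k n fun σ hσ =>
    mem_simps_cosk X (by omega) (mem_simps_of_subcomplex (cosk_subset X h) hσ)

lemma persIso_surj {k : Type} [Field k] {A B : PersMod k} (e : PersIso k A B) (i : ℕ)
    (hA : Function.Surjective (A.map i)) : Function.Surjective (B.map i) := by
  intro z
  obtain ⟨x, hx⟩ := hA ((e.e (i + 1)).symm z)
  exact ⟨e.e i x, by rw [← e.comm, hx, LinearEquiv.apply_symm_apply]⟩

lemma persIso_inj {k : Type} [Field k] {A B : PersMod k} (e : PersIso k A B) (i : ℕ)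
    (hA : Function.Injective (A.map i)) : Function.Injective (B.map i) := by
  intro y1 y2 hy
  have h1 : B.map i (e.e i ((e.e i).symm y1)) = B.map i (e.e i ((e.e i).symm y2)) := by
    rw [LinearEquiv.apply_symm_apply, LinearEquiv.apply_symm_apply]; exact hy
  rw [← e.comm, ← e.comm] at h1
  have h2 := hA ((e.e (i + 1)).injective h1)
  have h3 := congrArg (e.e i) h2
  rwa [LinearEquiv.apply_symm_apply, LinearEquiv.apply_symm_apply] at h3

lemma dirSum_surj_comp {k : Type} [Field k] {m : ℕ} (P : Fin m → PersMod k) (i : ℕ)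
    (h : Function.Surjective ((dirSum k P).map i)) (j : Fin m) :
    Function.Surjective ((P j).map i) := by
  intro y
  obtain ⟨x, hx⟩ := h (Function.update (0 : ∀ j', (P j').M (i + 1)) j y)
  refine ⟨x j, ?_⟩
  have h2 := congrFun hx j
  change (P j).map i (x j) = Function.update (0 : ∀ j', (P j').M (i + 1)) j y j at h2
  simpa [dirSum, Function.update_self] using h2

lemma dirSum_inj_comp {k : Type} [Field k] {m : ℕ} (P : Fin m → PersMod k) (i : ℕ)
    (h : Function.Injective ((dirSum k P).map i)) (j : Fin m) :
    Function.Injective ((P j).map i) := by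
  intro y1 y2 hy
  have h2 : (dirSum k P).map i (Function.update (0 : ∀ j', (P j').M i) j y1) =
      (dirSum k P).map i (Function.update (0 : ∀ j', (P j').M i) j y2) := by
    funext j'
    by_cases hj : j' = j
    · subst hj
      show (P j').map i (Function.update (0 : ∀ j'', (P j'').M i) j' y1 j') = (P j').map i (Function.update (0 : ∀ j'', (P j'').M i) j' y2 j')
      simpa [dirSum, Function.update_self] using hy
    · show (P j').map i (Function.update (0 : ∀ j'', (P j'').M i) j y1 j') = (P j').map i (Function.update (0 : ∀ j'', (P j'').M i) j y2 j')
      simp [dirSum, Function.update_of_ne hj]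
  have h3 := congrFun (h h2) j
  simpa [Function.update_self] using h3

lemma interval_surj_b {k : Type} [Field k] {b d i : ℕ} (hb : b = i + 1) (hd : i + 1 < d)
    (h : Function.Surjective ((intervalMod k b d).map i)) : False := by
  obtain ⟨x, hx⟩ := h (fun _ => 1)
  have h2 := congrFun hx ⟨i + 1, rfl, by omega, hd⟩
  simp only [intervalMod, LinearMap.coe_mk, AddHom.coe_mk] at h2
  change (if h : b ≤ i ∧ i < d then x ⟨i, rfl, h.1, h.2⟩ else 0) = 1 at h2
  rw [dif_neg (by omega)] at h2
  exact zero_ne_one h2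

lemma interval_inj_d {k : Type} [Field k] {b d i : ℕ} (hb : b ≤ i) (hd : d = i + 1)
    (h : Function.Injective ((intervalMod k b d).map i)) : False := by
  have h0 : (fun _ => (1 : k) : {j : ℕ // j = i ∧ b ≤ j ∧ j < d} → k) = 0 := by
    apply h
    funext jj
    exfalso
    obtain ⟨h1, h2, h3⟩ := jj.2
    omega
  have h4 := congrFun h0 ⟨i, rfl, hb, by omega⟩
  exact one_ne_zero h4

end AuxProof

/-- every interval `[b,d)` in the barcode of `Hⁿ(X^•;k)` satisfies
either `b = 0` and `d ≥ n+1`, or `b ≥ n+2`. -/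
theorem thickBetti_possible_intervals {V : Type} [Fintype V] [LinearOrder V] (X : AbsSC V) (k : Type) [Field k] (n : ℕ)
    (m : ℕ) (bd : Fin m → ℕ × ℕ)
    (hvalid : ∀ j, (bd j).1 < (bd j).2 ∧ (bd j).2 ≤ dimX X + 1)
    (hiso : Nonempty (PersIso k (coskPers X k n)
      (dirSum k fun j => intervalMod k (bd j).1 (bd j).2))) :
    ∀ j, ((bd j).1 = 0 ∧ n + 1 ≤ (bd j).2) ∨ n + 2 ≤ (bd j).1 := by
  intro j
  obtain ⟨e⟩ := hiso
  have hbd := (hvalid j).1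
  have hsurj : ∀ h : ℕ, h ≤ n →
      Function.Surjective ((intervalMod k (bd j).1 (bd j).2).map h) := fun h hh =>
    dirSum_surj_comp _ h (persIso_surj e h (coskPers_surj X k n h hh)) j
  have hinj : ∀ h : ℕ, h + 1 ≤ n →
      Function.Injective ((intervalMod k (bd j).1 (bd j).2).map h) := fun h hh =>
    dirSum_inj_comp _ h (persIso_inj e h (coskPers_inj X k n h hh)) j
  by_cases hb0 : (bd j).1 = 0
  · left
    refine ⟨hb0, ?_⟩
    by_contra hd
    push_neg at hd
    exact interval_inj_d (i := (bd j).2 - 1) (by omega) (by omega)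
      (hinj ((bd j).2 - 1) (by omega))
  · right
    by_contra hb
    push_neg at hb
    exact interval_surj_b (i := (bd j).1 - 1) (by omega) (by omega)
      (hsurj ((bd j).1 - 1) (by omega))
end

section
/- For h = {0, h_1, ..., h_m} with h_1 ≥ 1, the (0,h)-cohesive Betti number and the (0,h_1)-thick Betti number of a finite simplicial complex X satisfy β^{0,{0,h_1,...,h_m}}(X;k) = β^{0,h_1}(X;k) + #{v ∈ V(X) : v is not a face of any h_1-dimensional simplex of X}. -/
set_option linter.unusedSectionVars false
set_option linter.unusedVariables false

open Finset

section Aux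

open Relation

section ConstSub
variable {k : Type} [Field k] {α : Type}

/-- Submodule of functions constant along a relation. -/
def constSub (k : Type) [Field k] {α : Type} (r : α → α → Prop) : Submodule k (α → k) where
  carrier := {x | ∀ a b, r a b → x a = x b}
  add_mem' {x y} hx hy a b h := by simp [hx a b h, hy a b h]
  zero_mem' := by intro a b h; rfl
  smul_mem' c x hx a b h := by simp [hx a b h]

lemma mem_constSub {r : α → α → Prop} {x : α → k} :
    x ∈ constSub k r ↔ ∀ a b, r a b → x a = x b := Iff.rfl

/-- Functions constant along `r` are the same as functions on the quotient. -/
noncomputable def constSubEquiv (k : Type) [Field k] (r : α → α → Prop) :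
    (constSub k r) ≃ₗ[k] (Quotient (EqvGen.setoid r) → k) where
  toFun x := Quotient.lift x.1 (fun a b h => by
    induction h with
    | rel a b h => exact x.2 a b h
    | refl => rfl
    | symm _ _ _ ih => exact ih.symm
    | trans _ _ _ _ _ ih1 ih2 => exact ih1.trans ih2)
  map_add' x y := by funext q; induction q using Quotient.ind; rfl
  map_smul' c x := by funext q; induction q using Quotient.ind; rfl
  invFun y := ⟨fun a => y (Quotient.mk _ a), fun a b h =>
    congrArg y (Quotient.sound (EqvGen.rel a b h))⟩
  left_inv x := rfl
  right_inv y := by funext q; induction q using Quotient.ind; rfl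

lemma finrank_constSub [Finite α] (r : α → α → Prop) :
    Module.finrank k (constSub k r) = Nat.card (Quotient (EqvGen.setoid r)) := by
  have : Fintype (Quotient (EqvGen.setoid r)) := Fintype.ofFinite _
  rw [(constSubEquiv k r).finrank_eq, Module.finrank_fintype_fun_eq_card,
    Nat.card_eq_fintype_card]

end ConstSub

variable {V : Type} [Fintype V] [LinearOrder V]

lemma betti_zero_eq_finrank_ker (X : AbsSC V) (k : Type) [Field k] :
    betti X k 0 = Module.finrank k (LinearMap.ker (delta X k 0)) := by
  have h : (LinearMap.range (deltaTo X k 0)).comap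
      (LinearMap.ker (delta X k 0)).subtype = ⊥ := by
    rw [show deltaTo X k 0 = 0 from rfl, LinearMap.range_zero, Submodule.comap_bot,
      Submodule.ker_subtype]
  exact (Submodule.quotEquivOfEqBot _ h).finrank_eq

lemma pbetti_zero_eq_finrank_ker (P : Finset (Finset V)) (k : Type) [Field k] :
    pbetti P k 0 = Module.finrank k (LinearMap.ker (deltaP P k 0)) := by
  have h : (LinearMap.range (deltaPTo P k 0)).comap
      (LinearMap.ker (deltaP P k 0)).subtype = ⊥ := by
    rw [show deltaPTo P k 0 = 0 from rfl, LinearMap.range_zero, Submodule.comap_bot,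
      Submodule.ker_subtype]
  exact (Submodule.quotEquivOfEqBot _ h).finrank_eq

end Aux
section PosetKer

open Relation
variable {V : Type} [Fintype V] [LinearOrder V]

/-- The relation on 0-chains: strict inclusion of the underlying simplices. -/
def rP (P : Finset (Finset V)) : PChain P 0 → PChain P 0 → Prop :=
  fun c d => c.1 0 ⊂ d.1 0

/-- The 0-chain on a single element of `P`. -/
def mkP (P : Finset (Finset V)) (σ : Finset V) (h : σ ∈ P) : PChain P 0 :=
  ⟨fun _ => σ, fun _ => h, fun i j hij => by
    have : i = j := Fin.ext (by omega)
    exact absurd (this ▸ hij) (lt_irrefl j)⟩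

lemma mkP_eta {P : Finset (Finset V)} (c : PChain P 0) : c = mkP P (c.1 0) (c.2.1 0) :=
  Subtype.ext (funext fun j => congrArg c.1 (Fin.ext (Nat.lt_one_iff.mp j.isLt)))

/-- The 1-chain on a strict inclusion in `P`. -/
def mkP2 (P : Finset (Finset V)) (σ τ : Finset V) (hσ : σ ∈ P) (hτ : τ ∈ P)
    (hst : σ ⊂ τ) : PChain P 1 :=
  ⟨fun i => if i = 0 then σ else τ,
   fun i => by fin_cases i <;> simp [hσ, hτ],
   by intro i j hij; fin_cases i <;> fin_cases j <;> simp_all⟩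

lemma chainFace_zero {P : Finset (Finset V)} (g : PChain P 1) :
    chainFace g 0 = mkP P (g.1 1) (g.2.1 1) := by
  refine Subtype.ext (funext fun j => ?_)
  show g.1 ((0 : Fin 2).succAbove j) = g.1 1
  exact congrArg g.1 (by fin_cases j; decide)

lemma chainFace_one {P : Finset (Finset V)} (g : PChain P 1) :
    chainFace g 1 = mkP P (g.1 0) (g.2.1 0) := by
  refine Subtype.ext (funext fun j => ?_)
  show g.1 ((1 : Fin 2).succAbove j) = g.1 0
  exact congrArg g.1 (by fin_cases j; decide)

lemma deltaP_apply (P : Finset (Finset V)) (k : Type) [Field k]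
    (x : PChain P 0 → k) (g : PChain P 1) :
    deltaP P k 0 x g = x (chainFace g 0) - x (chainFace g 1) := by
  simp [deltaP, Fin.sum_univ_two, sub_eq_add_neg]

lemma ker_deltaP (P : Finset (Finset V)) (k : Type) [Field k] :
    LinearMap.ker (deltaP P k 0) = constSub k (rP P) := by
  ext x
  simp only [LinearMap.mem_ker, mem_constSub]
  constructor
  · intro hx c d hcd
    set g := mkP2 P (c.1 0) (d.1 0) (c.2.1 0) (d.2.1 0) hcd with hg
    have h0 := congrFun hx g
    rw [deltaP_apply, chainFace_zero, chainFace_one] at h0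
    have e1 : g.1 1 = d.1 0 := rfl
    have e0 : g.1 0 = c.1 0 := rfl
    have hd : mkP P (g.1 1) (g.2.1 1) = d := by
      rw [mkP_eta d]; exact Subtype.ext (funext fun j => congrArg (fun s => s) e1)
    have hc : mkP P (g.1 0) (g.2.1 0) = c := by
      rw [mkP_eta c]; exact Subtype.ext (funext fun j => congrArg (fun s => s) e0)
    rw [hd, hc] at h0
    have := sub_eq_zero.1 h0
    exact this.symm
  · intro hx
    funext g
    rw [show (0 : PChain P 1 → k) g = 0 from rfl, deltaP_apply]
    have hrel : rP P (chainFace g 1) (chainFace g 0) := by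
      show (chainFace g 1).1 0 ⊂ (chainFace g 0).1 0
      rw [chainFace_zero, chainFace_one]
      exact g.2.2 (show (0 : Fin 2) < 1 by decide)
    rw [hx _ _ hrel, sub_self]

end PosetKer
section EdgeKer

open Relation
variable {V : Type} [Fintype V] [LinearOrder V]

/-- Two vertices (as 0-simplices) are related if they lie in a common edge. -/
def rE (Y : AbsSC V) : {σ : Finset V // σ ∈ simps Y 0} → {σ : Finset V // σ ∈ simps Y 0} → Prop :=
  fun s t => ∃ e ∈ simps Y 1, s.1 ⊆ e ∧ t.1 ⊆ e

lemma sign_opp (k : Type) [Field k] {e : Finset V} (he : e.card = 2) {a b : V}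
    (ha : a ∈ e) (hb : b ∈ e) (hab : a ≠ b) :
    ((-1 : k) ^ (List.idxOf a (e.sort (· ≤ ·)))) =
      - ((-1 : k) ^ (List.idxOf b (e.sort (· ≤ ·)))) := by
  set l := e.sort (· ≤ ·) with hl
  have hla : a ∈ l := (Finset.mem_sort _).2 ha
  have hlb : b ∈ l := (Finset.mem_sort _).2 hb
  have hlen : l.length = 2 := by rw [hl, Finset.length_sort, he]
  have hia : List.idxOf a l < 2 := hlen ▸ List.idxOf_lt_length_iff.2 hla
  have hib : List.idxOf b l < 2 := hlen ▸ List.idxOf_lt_length_iff.2 hlb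
  have hne : List.idxOf a l ≠ List.idxOf b l := fun h => hab ((List.idxOf_inj hla).1 h)
  have hcase : (List.idxOf a l = 0 ∧ List.idxOf b l = 1) ∨
      (List.idxOf a l = 1 ∧ List.idxOf b l = 0) := by omega
  rcases hcase with ⟨h1, h2⟩ | ⟨h1, h2⟩ <;> rw [h1, h2] <;> ring

lemma erase_pair_left {a b : V} (hab : a ≠ b) : ({a, b} : Finset V).erase a = {b} := by
  ext t; simp only [Finset.mem_erase, Finset.mem_insert, Finset.mem_singleton]
  constructor
  · rintro ⟨ht, rfl | rfl⟩
    · exact absurd rfl ht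
    · rfl
  · rintro rfl; exact ⟨fun h => hab h.symm, Or.inr rfl⟩

lemma erase_pair_right {a b : V} (hab : a ≠ b) : ({a, b} : Finset V).erase b = {a} := by
  rw [Finset.pair_comm]; exact erase_pair_left hab.symm

lemma delta_apply_edge (Y : AbsSC V) (k : Type) [Field k]
    (x : {σ : Finset V // σ ∈ simps Y 0} → k) {a b : V} (hab : a ≠ b)
    (he : ({a, b} : Finset V) ∈ simps Y 1)
    (ha0 : ({a} : Finset V) ∈ simps Y 0) (hb0 : ({b} : Finset V) ∈ simps Y 0) :
    delta Y k 0 x ⟨{a, b}, he⟩ =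
      ((-1 : k) ^ (List.idxOf a (({a, b} : Finset V).sort (· ≤ ·)))) *
        (x ⟨{b}, hb0⟩ - x ⟨{a}, ha0⟩) := by
  have hcard : ({a, b} : Finset V).card = 2 := (Finset.mem_filter.1 he).2
  have hea : ({a, b} : Finset V).erase a = {b} := erase_pair_left hab
  have heb : ({a, b} : Finset V).erase b = {a} := erase_pair_right hab
  have hma : a ∈ ({a, b} : Finset V) := by simp
  have hmb : b ∈ ({a, b} : Finset V) := by simp
  simp only [delta, LinearMap.pi_apply, LinearMap.sum_apply, LinearMap.smul_apply, smul_eq_mul]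
  rw [Finset.sum_pair hab, hea, heb, evalL, dif_pos hb0, evalL, dif_pos ha0,
    sign_opp k hcard hmb hma hab.symm]
  show _ * x ⟨{b}, hb0⟩ + _ * x ⟨{a}, ha0⟩ = _
  ring

lemma ker_delta_zero (Y : AbsSC V) (k : Type) [Field k] :
    LinearMap.ker (delta Y k 0) = constSub k (rE Y) := by
  ext x
  simp only [LinearMap.mem_ker, mem_constSub]
  constructor
  · intro hx s t hst
    obtain ⟨e, he, hse, hte⟩ := hst
    obtain ⟨a, hsa⟩ := Finset.card_eq_one.1 (Finset.mem_filter.1 s.2).2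
    obtain ⟨b, htb⟩ := Finset.card_eq_one.1 (Finset.mem_filter.1 t.2).2
    have ha : a ∈ e := hse (hsa ▸ Finset.mem_singleton_self a)
    have hb : b ∈ e := hte (htb ▸ Finset.mem_singleton_self b)
    by_cases hab : a = b
    · have : s = t := Subtype.ext (by rw [hsa, htb, hab])
      rw [this]
    · have hE : e = {a, b} := by
        refine (Finset.eq_of_subset_of_card_le ?_ ?_).symm
        · intro t ht
          rcases Finset.mem_insert.1 ht with rfl | ht
          · exact ha
          · exact (Finset.mem_singleton.1 ht) ▸ hb
        · rw [(Finset.mem_filter.1 he).2, Finset.card_pair hab]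
      subst hE
      have ha0 : ({a} : Finset V) ∈ simps Y 0 := hsa ▸ s.2
      have hb0 : ({b} : Finset V) ∈ simps Y 0 := htb ▸ t.2
      have h0 := congrFun hx ⟨{a, b}, he⟩
      rw [delta_apply_edge Y k x hab he ha0 hb0] at h0
      have hpow : ((-1 : k) ^ (List.idxOf a (({a, b} : Finset V).sort (· ≤ ·)))) ≠ 0 :=
        pow_ne_zero _ (neg_ne_zero.2 one_ne_zero)
      have hsub := (mul_eq_zero.1 h0).resolve_left hpow
      have heq : x ⟨{b}, hb0⟩ = x ⟨{a}, ha0⟩ := sub_eq_zero.1 hsub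
      have hs : s = ⟨{a}, ha0⟩ := Subtype.ext hsa
      have ht' : t = ⟨{b}, hb0⟩ := Subtype.ext htb
      rw [hs, ht', heq]
  · intro hx
    funext e
    obtain ⟨a, b, hab, hE⟩ := Finset.card_eq_two.1 (Finset.mem_filter.1 e.2).2
    have he : ({a, b} : Finset V) ∈ simps Y 1 := hE ▸ e.2
    have heq : e = ⟨{a, b}, he⟩ := Subtype.ext hE
    have ha0 : ({a} : Finset V) ∈ simps Y 0 :=
      erase_pair_right hab ▸ erase_mem_simps Y he (by simp)
    have hb0 : ({b} : Finset V) ∈ simps Y 0 :=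
      erase_pair_left hab ▸ erase_mem_simps Y he (by simp)
    have hrel : rE Y ⟨{a}, ha0⟩ ⟨{b}, hb0⟩ :=
      ⟨{a, b}, he, by simp, by simp⟩
    show delta Y k 0 x e = 0
    rw [heq, delta_apply_edge Y k x hab he ha0 hb0, hx _ _ hrel, sub_self, mul_zero]

end EdgeKer
section Combinatorics

open Relation
variable {V : Type} [Fintype V] [LinearOrder V]

instance (P : Finset (Finset V)) (n : ℕ) : Finite (PChain P n) := by
  unfold PChain; infer_instance

lemma eqvGen_lift {α β : Type} {r : α → α → Prop} {f : α → β}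
    (h : ∀ a b, r a b → f a = f b) : ∀ a b, EqvGen r a b → f a = f b := by
  intro a b hab
  induction hab with
  | rel a b h' => exact h a b h'
  | refl => rfl
  | symm _ _ _ ih => exact ih.symm
  | trans _ _ _ _ _ ih1 ih2 => exact ih1.trans ih2

/-- Isolated vertices. -/
abbrev IsoT (X : AbsSC V) (h1 : ℕ) : Type :=
  {v : V // ({v} : Finset V) ∈ X.faces ∧ ¬ ∃ σ ∈ X.faces, σ.card = h1 + 1 ∧ v ∈ σ}

lemma chain_mem_faces (X : AbsSC V) (hs : Finset ℕ) (c : PChain (hposet X hs) 0) :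
    c.1 0 ∈ X.faces := (Finset.mem_filter.1 (c.2.1 0)).1

lemma chain_dim_mem (X : AbsSC V) (hs : Finset ℕ) (c : PChain (hposet X hs) 0) :
    (c.1 0).card - 1 ∈ hs := (Finset.mem_filter.1 (c.2.1 0)).2

lemma chain_nonempty (X : AbsSC V) (hs : Finset ℕ) (c : PChain (hposet X hs) 0) :
    (c.1 0).Nonempty := X.nonempty_of_mem _ (chain_mem_faces X hs c)

lemma mem_cosk_singleton (X : AbsSC V) (h1 : ℕ) {τ : Finset V} {v : V}
    (hτ : τ ∈ X.faces) (hcard : h1 + 1 ≤ τ.card) (hv : v ∈ τ) :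
    ({v} : Finset V) ∈ simps (coskeleton X h1) 0 := by
  refine Finset.mem_filter.2 ⟨Finset.mem_filter.2 ⟨?_, τ, hτ, ?_, hcard⟩, ?_⟩
  · exact X.down_closed τ hτ {v} (Finset.singleton_subset_iff.2 hv) ⟨v, by simp⟩
  · exact Finset.singleton_subset_iff.2 hv
  · simp

lemma minMemCosk (X : AbsSC V) (hs : Finset ℕ) (h1 : ℕ) (c : PChain (hposet X hs) 0)
    (hc : ∃ τ ∈ X.faces, h1 + 1 ≤ τ.card ∧ c.1 0 ⊆ τ) :
    ({(c.1 0).min' (chain_nonempty X hs c)} : Finset V) ∈ simps (coskeleton X h1) 0 := by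
  obtain ⟨τ, hτ, hcard, hsub⟩ := hc
  exact mem_cosk_singleton X h1 hτ hcard (hsub (Finset.min'_mem _ _))

lemma chain_eq_singleton (X : AbsSC V) (hs : Finset ℕ) (h1 : ℕ)
    (hmin1 : ∀ j ∈ hs, j ≠ 0 → h1 ≤ j) (c : PChain (hposet X hs) 0)
    (hc : ¬ ∃ τ ∈ X.faces, h1 + 1 ≤ τ.card ∧ c.1 0 ⊆ τ) :
    c.1 0 = {(c.1 0).min' (chain_nonempty X hs c)} := by
  have hpos : 0 < (c.1 0).card := (chain_nonempty X hs c).card_pos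
  have hcard : (c.1 0).card = 1 := by
    by_contra h
    have h2 : 2 ≤ (c.1 0).card := by omega
    have hdim : h1 ≤ (c.1 0).card - 1 := hmin1 _ (chain_dim_mem X hs c) (by omega)
    exact hc ⟨c.1 0, chain_mem_faces X hs c, by omega, subset_rfl⟩
  exact Finset.eq_singleton_iff_unique_mem.2 ⟨Finset.min'_mem _ _,
    fun x hx => Finset.card_le_one.1 (le_of_eq hcard) x hx _ (Finset.min'_mem _ _)⟩

lemma iso_pred (X : AbsSC V) (hs : Finset ℕ) (h1 : ℕ)
    (hmin1 : ∀ j ∈ hs, j ≠ 0 → h1 ≤ j) (c : PChain (hposet X hs) 0)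
    (hc : ¬ ∃ τ ∈ X.faces, h1 + 1 ≤ τ.card ∧ c.1 0 ⊆ τ) :
    ({(c.1 0).min' (chain_nonempty X hs c)} : Finset V) ∈ X.faces ∧
      ¬ ∃ σ ∈ X.faces, σ.card = h1 + 1 ∧ (c.1 0).min' (chain_nonempty X hs c) ∈ σ := by
  have hsing := chain_eq_singleton X hs h1 hmin1 c hc
  constructor
  · rw [← hsing]; exact chain_mem_faces X hs c
  · rintro ⟨σ, hσ, hσcard, hσmem⟩
    refine hc ⟨σ, hσ, by omega, ?_⟩
    rw [hsing]
    exact Finset.singleton_subset_iff.2 hσmem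

open Classical in
/-- The map on representatives from the hposet quotient to coskeleton-components ⊕ isolated. -/
noncomputable def fAux (X : AbsSC V) (hs : Finset ℕ) (h1 : ℕ)
    (hmin1 : ∀ j ∈ hs, j ≠ 0 → h1 ≤ j) (c : PChain (hposet X hs) 0) :
    Quotient (EqvGen.setoid (rE (coskeleton X h1))) ⊕ IsoT X h1 :=
  if hc : ∃ τ ∈ X.faces, h1 + 1 ≤ τ.card ∧ c.1 0 ⊆ τ then
    Sum.inl (Quotient.mk _ ⟨{(c.1 0).min' (chain_nonempty X hs c)}, minMemCosk X hs h1 c hc⟩)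
  else
    Sum.inr ⟨(c.1 0).min' (chain_nonempty X hs c), iso_pred X hs h1 hmin1 c hc⟩

lemma eqv_vertices (X : AbsSC V) (h1 : ℕ) {τ : Finset V} {u w : V}
    (hτ : τ ∈ X.faces) (hcard : h1 + 1 ≤ τ.card) (hu : u ∈ τ) (hw : w ∈ τ)
    (hu0 : ({u} : Finset V) ∈ simps (coskeleton X h1) 0)
    (hw0 : ({w} : Finset V) ∈ simps (coskeleton X h1) 0) :
    EqvGen (rE (coskeleton X h1)) ⟨{u}, hu0⟩ ⟨{w}, hw0⟩ := by
  by_cases huw : u = w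
  · have : (⟨{u}, hu0⟩ : {σ : Finset V // σ ∈ simps (coskeleton X h1) 0}) = ⟨{w}, hw0⟩ :=
      Subtype.ext (show ({u} : Finset V) = ({w} : Finset V) by rw [huw])
    rw [this]
    exact EqvGen.refl _
  · have hsub : ({u, w} : Finset V) ⊆ τ := by
      intro t ht
      rcases Finset.mem_insert.1 ht with rfl | ht
      · exact hu
      · exact (Finset.mem_singleton.1 ht) ▸ hw
    have hfaces : ({u, w} : Finset V) ∈ X.faces :=
      X.down_closed τ hτ _ hsub ⟨u, by simp⟩
    have hcosk : ({u, w} : Finset V) ∈ (coskeleton X h1).faces :=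
      Finset.mem_filter.2 ⟨hfaces, τ, hτ, hsub, hcard⟩
    have he1 : ({u, w} : Finset V) ∈ simps (coskeleton X h1) 1 :=
      Finset.mem_filter.2 ⟨hcosk, Finset.card_pair huw⟩
    exact EqvGen.rel _ _ ⟨{u, w}, he1, by simp, by simp⟩

lemma fAux_rel (X : AbsSC V) (hs : Finset ℕ) (h1 : ℕ)
    (hmin1 : ∀ j ∈ hs, j ≠ 0 → h1 ≤ j)
    (c d : PChain (hposet X hs) 0) (h : rP (hposet X hs) c d) :
    fAux X hs h1 hmin1 c = fAux X hs h1 hmin1 d := by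
  have hss : c.1 0 ⊂ d.1 0 := h
  have hclt : (c.1 0).card < (d.1 0).card := Finset.card_lt_card hss
  have hcpos : 0 < (c.1 0).card := (chain_nonempty X hs c).card_pos
  have hd2 : 2 ≤ (d.1 0).card := by omega
  have hddim : h1 ≤ (d.1 0).card - 1 := hmin1 _ (chain_dim_mem X hs d) (by omega)
  have hCd : ∃ τ ∈ X.faces, h1 + 1 ≤ τ.card ∧ d.1 0 ⊆ τ :=
    ⟨d.1 0, chain_mem_faces X hs d, by omega, subset_rfl⟩
  have hCc : ∃ τ ∈ X.faces, h1 + 1 ≤ τ.card ∧ c.1 0 ⊆ τ :=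
    ⟨d.1 0, chain_mem_faces X hs d, by omega, hss.subset⟩
  rw [fAux, dif_pos hCc, fAux, dif_pos hCd]
  refine congrArg Sum.inl (Quotient.sound ?_)
  exact eqv_vertices X h1 (chain_mem_faces X hs d) (by omega)
    (hss.subset (Finset.min'_mem _ _)) (Finset.min'_mem _ _) _ _

lemma singleton0_mem_P (X : AbsSC V) (hs : Finset ℕ) (h1 : ℕ) (h0mem : 0 ∈ hs)
    (s : {σ : Finset V // σ ∈ simps (coskeleton X h1) 0}) : s.1 ∈ hposet X hs := by
  have h1' := Finset.mem_filter.1 s.2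
  exact Finset.mem_filter.2 ⟨cosk_subset X h1 h1'.1, by rw [h1'.2]; simpa using h0mem⟩

/-- The inverse on coskeleton components. -/
noncomputable def gAux (X : AbsSC V) (hs : Finset ℕ) (h1 : ℕ) (h0mem : 0 ∈ hs)
    (s : {σ : Finset V // σ ∈ simps (coskeleton X h1) 0}) :
    Quotient (EqvGen.setoid (rP (hposet X hs))) :=
  Quotient.mk _ (mkP (hposet X hs) s.1 (singleton0_mem_P X hs h1 h0mem s))

lemma gAux_rel (X : AbsSC V) (hs : Finset ℕ) (h1 : ℕ) (h0mem : 0 ∈ hs) (hh1 : h1 ∈ hs)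
    (hpos : 0 < h1)
    (s t : {σ : Finset V // σ ∈ simps (coskeleton X h1) 0})
    (h : rE (coskeleton X h1) s t) : gAux X hs h1 h0mem s = gAux X hs h1 h0mem t := by
  obtain ⟨e, he1, hse, hte⟩ := h
  have he1' := Finset.mem_filter.1 he1
  have hecosk := Finset.mem_filter.1 he1'.1
  obtain ⟨τ, hτ, hsubτ, hcardτ⟩ := hecosk.2
  obtain ⟨τ', hsub1, hsub2, hcard'⟩ :=
    Finset.exists_subsuperset_card_eq hsubτ (by omega : e.card ≤ h1 + 1) hcardτ
  have hτ'X : τ' ∈ X.faces :=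
    X.down_closed τ hτ τ' hsub2 (Finset.card_pos.1 (by omega))
  have hτ'P : τ' ∈ hposet X hs := Finset.mem_filter.2 ⟨hτ'X, by rw [hcard']; simpa using hh1⟩
  have hscard : s.1.card = 1 := (Finset.mem_filter.1 s.2).2
  have htcard : t.1.card = 1 := (Finset.mem_filter.1 t.2).2
  have hsP := singleton0_mem_P X hs h1 h0mem s
  have htP := singleton0_mem_P X hs h1 h0mem t
  have hsss : s.1 ⊂ τ' := by
    refine Finset.ssubset_iff_subset_ne.2 ⟨hse.trans hsub1, fun heq => ?_⟩
    rw [heq, hcard'] at hscard; omega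
  have htss : t.1 ⊂ τ' := by
    refine Finset.ssubset_iff_subset_ne.2 ⟨hte.trans hsub1, fun heq => ?_⟩
    rw [heq, hcard'] at htcard; omega
  refine (Quotient.sound (EqvGen.rel _ _ (show rP _ (mkP _ s.1 hsP) (mkP _ τ' hτ'P) from hsss))).trans
    (Quotient.sound (EqvGen.symm _ _ (EqvGen.rel _ _
      (show rP _ (mkP _ t.1 htP) (mkP _ τ' hτ'P) from htss))))

end Combinatorics
section Inverses

open Relation
variable {V : Type} [Fintype V] [LinearOrder V]

lemma iso_mem_P (X : AbsSC V) (hs : Finset ℕ) (h1 : ℕ) (h0mem : 0 ∈ hs) (v : IsoT X h1) :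
    ({v.1} : Finset V) ∈ hposet X hs :=
  Finset.mem_filter.2 ⟨v.2.1, by simpa using h0mem⟩

lemma quot_mk_singleton (P : Finset (Finset V)) (c : PChain P 0) {s : Finset V}
    (hx : c.1 0 = s) (hmem : s ∈ P) :
    Quotient.mk (EqvGen.setoid (rP P)) (mkP P s hmem) = Quotient.mk _ c := by
  refine congrArg _ (Subtype.ext (funext fun j => ?_))
  show s = c.1 j
  rw [show c.1 j = c.1 0 from congrArg c.1 (Fin.ext (Nat.lt_one_iff.mp j.isLt)), hx]

lemma g_fAux_eq (X : AbsSC V) (hs : Finset ℕ) (h1 : ℕ) (h0mem : 0 ∈ hs) (hh1 : h1 ∈ hs)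
    (hpos : 0 < h1) (hmin1 : ∀ j ∈ hs, j ≠ 0 → h1 ≤ j) (c : PChain (hposet X hs) 0) :
    Sum.elim (Quotient.lift (gAux X hs h1 h0mem)
        (eqvGen_lift (gAux_rel X hs h1 h0mem hh1 hpos)))
      (fun v => Quotient.mk _ (mkP (hposet X hs) {v.1} (iso_mem_P X hs h1 h0mem v)))
      (fAux X hs h1 hmin1 c) = Quotient.mk _ c := by
  by_cases hc : ∃ τ ∈ X.faces, h1 + 1 ≤ τ.card ∧ c.1 0 ⊆ τ
  · rw [fAux, dif_pos hc]
    by_cases hsing : c.1 0 = {(c.1 0).min' (chain_nonempty X hs c)}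
    · exact quot_mk_singleton _ c hsing _
    · refine Quotient.sound (EqvGen.rel _ _ ?_)
      exact Finset.ssubset_iff_subset_ne.2
        ⟨Finset.singleton_subset_iff.2 (Finset.min'_mem _ _), fun h => hsing h.symm⟩
  · rw [fAux, dif_neg hc]
    exact quot_mk_singleton _ c (chain_eq_singleton X hs h1 hmin1 c hc) _

lemma f_gAux_eq (X : AbsSC V) (hs : Finset ℕ) (h1 : ℕ) (h0mem : 0 ∈ hs)
    (hmin1 : ∀ j ∈ hs, j ≠ 0 → h1 ≤ j)
    (s : {σ : Finset V // σ ∈ simps (coskeleton X h1) 0}) :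
    fAux X hs h1 hmin1 (mkP (hposet X hs) s.1 (singleton0_mem_P X hs h1 h0mem s)) =
      Sum.inl (Quotient.mk _ s) := by
  set c := mkP (hposet X hs) s.1 (singleton0_mem_P X hs h1 h0mem s) with hcdef
  have hs2 := Finset.mem_filter.1 s.2
  have hcosk := Finset.mem_filter.1 hs2.1
  obtain ⟨τ, hτ, hsub, hcard⟩ := hcosk.2
  have hC : ∃ τ ∈ X.faces, h1 + 1 ≤ τ.card ∧ c.1 0 ⊆ τ := ⟨τ, hτ, hcard, hsub⟩
  rw [fAux, dif_pos hC]
  refine congrArg (fun z => Sum.inl (Quotient.mk _ z)) (Subtype.ext ?_)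
  show ({(c.1 0).min' (chain_nonempty X hs c)} : Finset V) = s.1
  refine (Finset.eq_singleton_iff_unique_mem.2 ⟨Finset.min'_mem _ _, fun x hx => ?_⟩).symm
  exact Finset.card_le_one.1 (le_of_eq hs2.2) x hx _ (Finset.min'_mem _ _)

lemma f_gIso_eq (X : AbsSC V) (hs : Finset ℕ) (h1 : ℕ) (h0mem : 0 ∈ hs) (hpos : 0 < h1)
    (hmin1 : ∀ j ∈ hs, j ≠ 0 → h1 ≤ j) (v : IsoT X h1) :
    fAux X hs h1 hmin1 (mkP (hposet X hs) {v.1} (iso_mem_P X hs h1 h0mem v)) =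
      Sum.inr v := by
  set c := mkP (hposet X hs) {v.1} (iso_mem_P X hs h1 h0mem v) with hcdef
  have hnc : ¬ ∃ τ ∈ X.faces, h1 + 1 ≤ τ.card ∧ c.1 0 ⊆ τ := by
    rintro ⟨τ, hτ, hcard, hsub⟩
    obtain ⟨τ', h1', h2', h3'⟩ := Finset.exists_subsuperset_card_eq hsub
      (show (c.1 0).card ≤ h1 + 1 by
        show ({v.1} : Finset V).card ≤ h1 + 1
        simp) hcard
    refine v.2.2 ⟨τ', X.down_closed τ hτ τ' h2' (Finset.card_pos.1 (by omega)), h3', ?_⟩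
    exact h1' (Finset.mem_singleton_self v.1)
  rw [fAux, dif_neg hnc]
  refine congrArg Sum.inr (Subtype.ext ?_)
  show (c.1 0).min' (chain_nonempty X hs c) = v.1
  exact Finset.mem_singleton.1 (Finset.min'_mem _ _)

end Inverses
/-- for `hs = {0, h1, …}` with `h1 ≥ 1`,
`β^(0,hs)(X;k) = β^(0,h1)(X;k) + #{v ∈ V(X) : v not a face of any h1-simplex}`. -/
theorem cohesive_eq_thick_plus_isolated {V : Type} [Fintype V] [LinearOrder V] (X : AbsSC V) (k : Type) [Field k]
    (hs : Finset ℕ) (h1 : ℕ) (h0mem : 0 ∈ hs) (hh1 : h1 ∈ hs) (hpos : 0 < h1)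
    (hmin1 : ∀ j ∈ hs, j ≠ 0 → h1 ≤ j) :
    pbetti (hposet X hs) k 0 =
      betti (coskeleton X h1) k 0 +
        Nat.card {v : V // ({v} : Finset V) ∈ X.faces ∧
          ¬ ∃ σ ∈ X.faces, σ.card = h1 + 1 ∧ v ∈ σ} := by
  classical
  rw [pbetti_zero_eq_finrank_ker, betti_zero_eq_finrank_ker, ker_deltaP, ker_delta_zero,
    finrank_constSub, finrank_constSub]
  have e : Quotient (Relation.EqvGen.setoid (rP (hposet X hs))) ≃
      Quotient (Relation.EqvGen.setoid (rE (coskeleton X h1))) ⊕ IsoT X h1 :=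
    { toFun := Quotient.lift (fAux X hs h1 hmin1) (eqvGen_lift (fAux_rel X hs h1 hmin1))
      invFun := Sum.elim (Quotient.lift (gAux X hs h1 h0mem)
          (eqvGen_lift (gAux_rel X hs h1 h0mem hh1 hpos)))
        (fun v => Quotient.mk _ (mkP (hposet X hs) {v.1} (iso_mem_P X hs h1 h0mem v)))
      left_inv := Quotient.ind (g_fAux_eq X hs h1 h0mem hh1 hpos hmin1)
      right_inv := by
        rintro (q | v)
        · induction q using Quotient.ind with
          | _ s => exact f_gAux_eq X hs h1 h0mem hmin1 s
        · exact f_gIso_eq X hs h1 h0mem hpos hmin1 v }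
  rw [Nat.card_congr e, Nat.card_sum]
end
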